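/- arXiv:1903.00635 — 2 statements merged into one kernel-verified Lean document; each statement's English description precedes it below -/
import Mathlib

section
/- Let L be a real symmetric positive definite N×N matrix, and let β, M̂ > 0 and σ̂² ≥ 0. The matrix P = (2β/M̂ - σ̂²β²)I - σ̂²M̂·L is positive definite if and only if σ̂² < 2β / (M̂(β² + λ_max(L)·M̂)). -/
/-!
Diagonalising `L` by an orthogonal matrix turns `P` into the diagonal matrix with entries
`2β/M̂ - σ̂²β² - σ̂²M̂ λᵢ`, so `P` is positive definite iff all of them are positive; since
`σ̂²M̂ ≥ 0`, the smallest of them is the one at `λ_max(L)`.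
-/

open Matrix Unitary
open scoped ComplexOrder

namespace Matrix.IsHermitian

variable {n 𝕜 : Type*} [Fintype n] [DecidableEq n] [RCLike 𝕜] {A : Matrix n n 𝕜}

theorem smul_one_sub_smul_eq_conj (hA : A.IsHermitian) (c d : ℝ) :
    c • (1 : Matrix n n 𝕜) - d • A = conjStarAlgAut ℝ _ hA.eigenvectorUnitary
      (diagonal fun i ↦ ((c - d * hA.eigenvalues i : ℝ) : 𝕜)) := by
  have hdiag : (diagonal fun i ↦ ((c - d * hA.eigenvalues i : ℝ) : 𝕜)) =
      c • 1 - d • diagonal (RCLike.ofReal ∘ hA.eigenvalues) := by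
    ext i j
    rcases eq_or_ne i j with rfl | h <;> simp [*, RCLike.real_smul_eq_coe_mul]
  have hspec : conjStarAlgAut ℝ _ hA.eigenvectorUnitary
      (diagonal (RCLike.ofReal ∘ hA.eigenvalues)) = A := hA.spectral_theorem.symm
  rw [hdiag, map_sub, map_smul, map_smul, map_one, hspec]

theorem posDef_smul_one_sub_smul_iff (hA : A.IsHermitian) (c d : ℝ) :
    (c • (1 : Matrix n n 𝕜) - d • A).PosDef ↔ ∀ i, d * hA.eigenvalues i < c := by
  rw [hA.smul_one_sub_smul_eq_conj, conjStarAlgAut_apply,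
    isUnit_coe.posDef_star_right_conjugate_iff, posDef_diagonal_iff]
  simp only [RCLike.ofReal_pos, sub_pos]

theorem posDef_smul_one_sub_smul_iff_of_nonneg [Nonempty n] (hA : A.IsHermitian) (c : ℝ)
    {d : ℝ} (hd : 0 ≤ d) :
    (c • (1 : Matrix n n 𝕜) - d • A).PosDef ↔ d * ⨆ i, hA.eigenvalues i < c := by
  obtain ⟨j, hj⟩ := Finite.exists_max hA.eigenvalues
  have hsup : ⨆ i, hA.eigenvalues i = hA.eigenvalues j :=
    le_antisymm (ciSup_le hj) (le_ciSup (Finite.bddAbove_range _) j)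
  rw [hA.posDef_smul_one_sub_smul_iff, hsup]
  exact ⟨fun h ↦ h j, fun h i ↦ (mul_le_mul_of_nonneg_left (hj i) hd).trans_lt h⟩

end Matrix.IsHermitian

theorem stmt3_general {N : ℕ} (hN : 0 < N) (L : Matrix (Fin N) (Fin N) ℝ) (hL : L.PosDef)
    (β M σ2 : ℝ) (hM : 0 < M) (hσ : 0 ≤ σ2) :
    ((2 * β / M - σ2 * β ^ 2) • (1 : Matrix (Fin N) (Fin N) ℝ) - (σ2 * M) • L).PosDef ↔
      σ2 < 2 * β / (M * (β ^ 2 + (⨆ j, hL.1.eigenvalues j) * M)) := by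
  have : Nonempty (Fin N) := ⟨⟨0, hN⟩⟩
  have hlam : 0 < ⨆ j, hL.1.eigenvalues j :=
    (hL.eigenvalues_pos ⟨0, hN⟩).trans_le (le_ciSup (Finite.bddAbove_range _) _)
  rw [hL.1.posDef_smul_one_sub_smul_iff_of_nonneg _ (by positivity), lt_sub_iff_add_lt,
    lt_div_iff₀ hM, lt_div_iff₀ (by positivity)]
  ring_nf

/-- Mean-square stability condition: `P = (2β/M̂ - σ̂²β²)I - σ̂²M̂·L` is positive definite
iff `σ̂² < 2β / (M̂(β² + λ_max(L)·M̂))`. -/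
theorem stmt3 {N : ℕ} (hN : 0 < N) (L : Matrix (Fin N) (Fin N) ℝ) (hL : L.PosDef)
    (β M σ2 : ℝ) (hβ : 0 < β) (hM : 0 < M) (hσ : 0 ≤ σ2) :
    ((2 * β / M - σ2 * β ^ 2) • (1 : Matrix (Fin N) (Fin N) ℝ) - (σ2 * M) • L).PosDef ↔
      σ2 < 2 * β / (M * (β ^ 2 + (⨆ j, hL.1.eigenvalues j) * M)) :=
  stmt3_general hN L hL β M σ2 hM hσ
end

section
/- Suppose N×N real matrices Q₀, Q₂, L satisfy: (i) -L Q₀ᵀ L⁻¹ - Q₀ + σ̂²M̂ L Q₂ = -M̂ J L⁻¹ and (ii) Q₀ + Q₀ᵀ + (σ̂²β² - 2β/M̂) Q₂ = -K, where L is symmetric positive definite and invertible, and P = (2β/M̂ - σ̂²β²)I - σ̂²M̂ L is invertible and commutes with L. Then Tr(Q₂) = Tr(P⁻¹(M̂ J L⁻¹ + K)). -/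
open Matrix

/-- Trace identity from the rearranged diagonal-block equations of the generalized
Lyapunov equation for a homogeneous power grid. -/
theorem stmt4 {N : ℕ} (L Q₀ Q₂ J K : Matrix (Fin N) (Fin N) ℝ)
    (hL : L.PosDef) (hLinv : IsUnit L)
    (M β σ2 : ℝ) (hM : 0 < M) (hβ : 0 < β) (hσ : 0 ≤ σ2)
    (P : Matrix (Fin N) (Fin N) ℝ)
    (hPdef : P = (2 * β / M - σ2 * β ^ 2) • (1 : Matrix (Fin N) (Fin N) ℝ) - (σ2 * M) • L)
    (hPinv : IsUnit P) (hPcomm : P⁻¹ * L = L * P⁻¹)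
    (heq1 : -(L * Q₀ᵀ * L⁻¹) - Q₀ + (σ2 * M) • (L * Q₂) = -(M • (J * L⁻¹)))
    (heq2 : Q₀ + Q₀ᵀ + (σ2 * β ^ 2 - 2 * β / M) • Q₂ = -K) :
    Q₂.trace = (P⁻¹ * (M • (J * L⁻¹) + K)).trace := by
  have hLdet : IsUnit L.det := (Matrix.isUnit_iff_isUnit_det L).mp hLinv
  have hPdet : IsUnit P.det := (Matrix.isUnit_iff_isUnit_det P).mp hPinv
  have hLL : L⁻¹ * L = 1 := Matrix.nonsing_inv_mul L hLdet
  have hPP : P⁻¹ * P = 1 := Matrix.nonsing_inv_mul P hPdet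
  -- key identity: P * Q₂ = Q₀ᵀ - L * Q₀ᵀ * L⁻¹ + (M • (J * L⁻¹) + K)
  have h1 : (σ2 * M) • (L * Q₂) = L * Q₀ᵀ * L⁻¹ + Q₀ - M • (J * L⁻¹) := by
    have := heq1
    abel_nf at this ⊢
    linear_combination (norm := abel) this
  have h2 : (2 * β / M - σ2 * β ^ 2) • Q₂ = Q₀ + Q₀ᵀ + K := by
    have h : (2 * β / M - σ2 * β ^ 2) • Q₂ = -((σ2 * β ^ 2 - 2 * β / M) • Q₂) := by
      rw [← neg_smul]; ring_nf
    rw [h]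
    linear_combination (norm := abel) -heq2
  have hPQ : P * Q₂ = Q₀ᵀ - L * Q₀ᵀ * L⁻¹ + (M • (J * L⁻¹) + K) := by
    rw [hPdef, Matrix.sub_mul, Matrix.smul_mul, Matrix.smul_mul, one_mul, h2, h1]
    abel
  have hQ₂ : Q₂ = P⁻¹ * (Q₀ᵀ - L * Q₀ᵀ * L⁻¹) + P⁻¹ * (M • (J * L⁻¹) + K) := by
    calc Q₂ = (P⁻¹ * P) * Q₂ := by rw [hPP, one_mul]
    _ = P⁻¹ * (P * Q₂) := by rw [Matrix.mul_assoc]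
    _ = _ := by rw [hPQ, Matrix.mul_add]
  have htr0 : (P⁻¹ * (Q₀ᵀ - L * Q₀ᵀ * L⁻¹)).trace = 0 := by
    have hcyc : (P⁻¹ * (L * Q₀ᵀ * L⁻¹)).trace = (P⁻¹ * Q₀ᵀ).trace := by
      calc (P⁻¹ * (L * Q₀ᵀ * L⁻¹)).trace
          = ((P⁻¹ * L) * (Q₀ᵀ * L⁻¹)).trace := by
            rw [Matrix.mul_assoc, Matrix.mul_assoc]
      _ = ((Q₀ᵀ * L⁻¹) * (L * P⁻¹)).trace := by rw [hPcomm, Matrix.trace_mul_comm]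
      _ = (Q₀ᵀ * ((L⁻¹ * L) * P⁻¹)).trace := by
            rw [Matrix.mul_assoc, Matrix.mul_assoc]
      _ = (Q₀ᵀ * P⁻¹).trace := by rw [hLL, one_mul]
      _ = (P⁻¹ * Q₀ᵀ).trace := by rw [Matrix.trace_mul_comm]
    rw [Matrix.mul_sub, Matrix.trace_sub, hcyc, sub_self]
  rw [hQ₂, Matrix.trace_add, htr0, zero_add]
end
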